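/- arXiv:1810.08545 — 9 statements merged into one kernel-verified Lean document; each statement's English description precedes it below -/
import Mathlib

section
/- Let L be a distributive lattice, a ≤ b in L, and Ψ any congruence on L with (a, b) ∈ Ψ. If b ∨ x = b ∨ y and a ∧ x = a ∧ y, then (x, y) ∈ Ψ. -/
variable {L : Type*}

def IsLatCong [Lattice L] (Θ : L → L → Prop) : Prop :=
  Equivalence Θ ∧ (∀ a b c d, Θ a b → Θ c d → Θ (a ⊔ c) (b ⊔ d)) ∧
    (∀ a b c d, Θ a b → Θ c d → Θ (a ⊓ c) (b ⊓ d))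

def IsCompat [Lattice L] {n : ℕ} (f : (Fin n → L) → L) : Prop :=
  ∀ Θ : L → L → Prop, IsLatCong Θ →
    ∀ x y : Fin n → L, (∀ i, Θ (x i) (y i)) → Θ (f x) (f y)

def IsCompat1 [Lattice L] (f : L → L) : Prop :=
  ∀ Θ : L → L → Prop, IsLatCong Θ → ∀ x y : L, Θ x y → Θ (f x) (f y)

def med [Lattice L] (a b c : L) : L := (a ⊔ b) ⊓ (b ⊔ c) ⊓ (c ⊔ a)

theorem stmt2 [DistribLattice L] (a b x y : L) (hab : a ≤ b)
    (Ψ : L → L → Prop) (hΨ : IsLatCong Ψ) (hΨab : Ψ a b)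
    (h1 : b ⊔ x = b ⊔ y) (h2 : a ⊓ x = a ⊓ y) : Ψ x y := by
  obtain ⟨heq, hsup, hinf⟩ := hΨ
  -- x Ψ x ⊓ (a ⊔ y)
  have hx : Ψ x (x ⊓ (a ⊔ y)) := by
    have : Ψ (x ⊓ (b ⊔ y)) (x ⊓ (a ⊔ y)) :=
      hinf _ _ _ _ (heq.refl x) (hsup _ _ _ _ (heq.symm hΨab) (heq.refl y))
    have hxb : x ⊓ (b ⊔ y) = x := by rw [← h1]; exact inf_eq_left.2 le_sup_right
    rwa [hxb] at this
  -- y Ψ y ⊓ (a ⊔ x)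
  have hy : Ψ y (y ⊓ (a ⊔ x)) := by
    have : Ψ (y ⊓ (b ⊔ x)) (y ⊓ (a ⊔ x)) :=
      hinf _ _ _ _ (heq.refl y) (hsup _ _ _ _ (heq.symm hΨab) (heq.refl x))
    have hyb : y ⊓ (b ⊔ x) = y := by rw [h1]; exact inf_eq_left.2 le_sup_right
    rwa [hyb] at this
  have e1 : x ⊓ (a ⊔ y) = (a ⊓ y) ⊔ (x ⊓ y) := by
    rw [inf_sup_left, inf_comm x a, h2]
  have e2 : y ⊓ (a ⊔ x) = (a ⊓ y) ⊔ (x ⊓ y) := by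
    rw [inf_sup_left, inf_comm y a, inf_comm y x]
  rw [e1] at hx
  rw [e2] at hy
  exact heq.trans hx (heq.symm hy)
end

section
/- Let L be a distributive lattice and a ≤ b in L. The principal congruence Θ_{a,b} (the smallest congruence containing the pair (a,b)) satisfies: (x, y) ∈ Θ_{a,b} if and only if b ∨ x = b ∨ y and a ∧ x = a ∧ y. -/
variable {L : Type*}

theorem stmt3 [DistribLattice L] (a b : L) (hab : a ≤ b) (x y : L) :
    (∀ Ψ : L → L → Prop, IsLatCong Ψ → Ψ a b → Ψ x y) ↔
      (b ⊔ x = b ⊔ y ∧ a ⊓ x = a ⊓ y) := by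
  constructor
  · intro h
    apply h (fun u v => b ⊔ u = b ⊔ v ∧ a ⊓ u = a ⊓ v)
    · refine ⟨⟨fun u => ⟨rfl, rfl⟩, fun h => ⟨h.1.symm, h.2.symm⟩,
        fun h1 h2 => ⟨h1.1.trans h2.1, h1.2.trans h2.2⟩⟩, ?_, ?_⟩
      · rintro p q r s ⟨h1, h2⟩ ⟨h3, h4⟩
        constructor
        · rw [sup_sup_distrib_left, h1, h3, ← sup_sup_distrib_left]
        · rw [inf_sup_left, h2, h4, ← inf_sup_left]
      · rintro p q r s ⟨h1, h2⟩ ⟨h3, h4⟩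
        constructor
        · rw [sup_inf_left, h1, h3, ← sup_inf_left]
        · rw [inf_inf_distrib_left, h2, h4, ← inf_inf_distrib_left]
    · exact ⟨by rw [sup_eq_left.2 hab, sup_idem], by rw [inf_idem, inf_eq_left.2 hab]⟩
  · rintro ⟨h1, h2⟩ Ψ ⟨heq, hsup, hinf⟩ hΨ
    -- Ψ (a ⊔ x) (a ⊔ y)
    have s1 : Ψ (a ⊔ x) (b ⊔ x) := hsup _ _ _ _ hΨ (heq.refl x)
    have s2 : Ψ (a ⊔ y) (b ⊔ y) := hsup _ _ _ _ hΨ (heq.refl y)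
    have s3 : Ψ (a ⊔ x) (a ⊔ y) := heq.trans (h1 ▸ s1) (heq.symm s2)
    have t1 : Ψ (x ⊓ (a ⊔ x)) (x ⊓ (a ⊔ y)) := hinf _ _ _ _ (heq.refl x) s3
    have t2 : Ψ (y ⊓ (a ⊔ y)) (y ⊓ (a ⊔ x)) := hinf _ _ _ _ (heq.refl y) (heq.symm s3)
    have e1 : x ⊓ (a ⊔ x) = x := inf_eq_left.2 le_sup_right
    have e2 : y ⊓ (a ⊔ y) = y := inf_eq_left.2 le_sup_right
    have e3 : x ⊓ (a ⊔ y) = y ⊓ (a ⊔ x) := by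
      rw [inf_sup_left, inf_sup_left, inf_comm x a, h2, inf_comm x y, inf_comm y a]
    rw [e1, e3] at t1
    rw [e2] at t2
    exact heq.trans t1 (heq.symm t2)
end

section
/- Let L be a bounded distributive lattice and f : L → L a nondecreasing compatible unary function. Then f(x) = (f(0) ∨ x) ∧ f(1) = med(f(0), x, f(1)) for all x ∈ L. -/
variable {L : Type*}

theorem stmt6 [DistribLattice L] [BoundedOrder L] (f : L → L)
    (hmono : Monotone f) (hcomp : IsCompat1 f) (x : L) :
    f x = (f ⊥ ⊔ x) ⊓ f ⊤ ∧ f x = med (f ⊥) x (f ⊤) := by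
  have hcong1 : IsLatCong (fun u v : L => u ⊔ x = v ⊔ x) := by
    refine ⟨⟨fun _ => rfl, fun h => h.symm, fun h h' => h.trans h'⟩, ?_, ?_⟩
    · intro a b c d h h'
      have e : ∀ p q : L, (p ⊔ q) ⊔ x = (p ⊔ x) ⊔ (q ⊔ x) := fun p q => by
        rw [sup_sup_sup_comm, sup_idem]
      rw [e, h, h', ← e]
    · intro a b c d h h'
      rw [sup_inf_right, h, h', ← sup_inf_right]
  have hcong2 : IsLatCong (fun u v : L => u ⊓ x = v ⊓ x) := by
    refine ⟨⟨fun _ => rfl, fun h => h.symm, fun h h' => h.trans h'⟩, ?_, ?_⟩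
    · intro a b c d h h'
      rw [inf_sup_right, h, h', ← inf_sup_right]
    · intro a b c d h h'
      have e : ∀ p q : L, (p ⊓ q) ⊓ x = (p ⊓ x) ⊓ (q ⊓ x) := fun p q => by
        rw [inf_inf_inf_comm, inf_idem]
      rw [e, h, h', ← e]
  have h1 : f x ⊔ x = f ⊥ ⊔ x := hcomp _ hcong1 x ⊥ (by simp)
  have h2 : f x ⊓ x = f ⊤ ⊓ x := hcomp _ hcong2 x ⊤ (by simp)
  have hb : f ⊥ ≤ f x := hmono bot_le
  have ht : f x ≤ f ⊤ := hmono le_top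
  have key : f x = (f ⊥ ⊔ x) ⊓ f ⊤ := by
    apply le_antisymm
    · exact le_inf (le_sup_left.trans_eq h1) ht
    · rw [inf_sup_right]
      refine sup_le (inf_le_left.trans hb) ?_
      rw [inf_comm, ← h2]
      exact inf_le_left
  refine ⟨key, ?_⟩
  rw [key, med, sup_eq_left.mpr (hb.trans ht), inf_assoc,
    inf_eq_right.mpr (le_sup_right : f ⊤ ≤ x ⊔ f ⊤)]
end

section
/- Let L be a bounded distributive lattice, n ≥ 1, and f : Lⁿ → L a nondecreasing function. Then f is compatible if and only if for every k ∈ {1,…,n} and every x ∈ Lⁿ, f(x) = med(f(x with k-th coordinate replaced by 0), x_k, f(x with k-th coordinate replaced by 1)). -/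
variable {L : Type*}

lemma supCong [DistribLattice L] (t : L) :
    IsLatCong (fun u v : L => u ⊔ t = v ⊔ t) := by
  refine ⟨⟨fun _ => rfl, fun h => h.symm, fun h h' => h.trans h'⟩, ?_, ?_⟩
  · intro a b c d h h'
    rw [sup_sup_distrib_right a c t, h, h', ← sup_sup_distrib_right]
  · intro a b c d h h'
    rw [sup_inf_right, h, h', ← sup_inf_right]

lemma infCong [DistribLattice L] (t : L) :
    IsLatCong (fun u v : L => u ⊓ t = v ⊓ t) := by
  refine ⟨⟨fun _ => rfl, fun h => h.symm, fun h h' => h.trans h'⟩, ?_, ?_⟩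
  · intro a b c d h h'
    rw [inf_sup_right, h, h', ← inf_sup_right]
  · intro a b c d h h'
    rw [inf_inf_distrib_right a c t, h, h', ← inf_inf_distrib_right]

lemma med_of_le [DistribLattice L] {a b : L} (t : L) (hab : a ≤ b) :
    med a t b = (a ⊔ t) ⊓ b := by
  unfold med
  rw [sup_eq_left.mpr hab]
  rw [inf_assoc, inf_eq_right.mpr (le_sup_right : b ≤ t ⊔ b)]

theorem stmt7 [DistribLattice L] [BoundedOrder L] {n : ℕ} (hn : 1 ≤ n)
    (f : (Fin n → L) → L) (hmono : Monotone f) :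
    IsCompat f ↔ ∀ (k : Fin n) (x : Fin n → L),
      f x = med (f (Function.update x k ⊥)) (x k) (f (Function.update x k ⊤)) := by
  classical
  constructor
  · intro hc k x
    set a := f (Function.update x k ⊥) with ha
    set b := f (Function.update x k ⊤) with hb
    set t := x k with ht
    have hav : a ≤ f x := by
      apply hmono
      intro i
      by_cases h : i = k
      · subst h; simp
      · simp [Function.update_of_ne h]
    have hvb : f x ≤ b := by
      apply hmono
      intro i
      by_cases h : i = k
      · subst h; simp
      · simp [Function.update_of_ne h]
    have h1 : f x ⊔ t = a ⊔ t := by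
      refine hc _ (supCong t) x (Function.update x k ⊥) fun i => ?_
      by_cases h : i = k
      · subst h; simp [ht]
      · simp [Function.update_of_ne h]
    have h2 : f x ⊓ t = b ⊓ t := by
      refine hc _ (infCong t) x (Function.update x k ⊤) fun i => ?_
      by_cases h : i = k
      · subst h; simp [ht]
      · simp [Function.update_of_ne h]
    rw [med_of_le t (hav.trans hvb)]
    calc f x = f x ⊔ f x ⊓ t := (sup_inf_self).symm
      _ = f x ⊔ b ⊓ t := by rw [h2]
      _ = f x ⊓ b ⊔ t ⊓ b := by rw [inf_eq_left.mpr hvb, inf_comm t b]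
      _ = (f x ⊔ t) ⊓ b := (inf_sup_right _ _ _).symm
      _ = (a ⊔ t) ⊓ b := by rw [h1]
  · intro hmed Θ hΘ x y hxy
    have key : ∀ s : Finset (Fin n),
        Θ (f x) (f (fun i => if i ∈ s then y i else x i)) := by
      intro s
      induction s using Finset.induction_on with
      | empty => simpa using hΘ.1.refl (f x)
      | @insert c s' ha ih =>
        have hupd : (fun i => if i ∈ insert c s' then y i else x i) =
            Function.update (fun i => if i ∈ s' then y i else x i) c (y c) := by
          funext i
          by_cases h : i = c
          · subst h; simp
          · simp [Function.update_of_ne h, h]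
        rw [hupd]
        refine hΘ.1.trans ih ?_
        set z : Fin n → L := fun i => if i ∈ s' then y i else x i with hz
        have hzc : z c = x c := by simp [hz, ha]
        rw [hmed c z, hmed c (Function.update z c (y c))]
        rw [Function.update_idem, Function.update_idem, Function.update_self,
          hzc]
        unfold med
        have hr := hΘ.1.refl
        exact hΘ.2.2 _ _ _ _ (hΘ.2.2 _ _ _ _ (hΘ.2.1 _ _ _ _ (hr _) (hxy c))
          (hΘ.2.1 _ _ _ _ (hxy c) (hr _))) (hr _)
    have := key Finset.univ
    simpa using this
end

section
/- Let L be a bounded distributive lattice and f₁, f₂ : Lⁿ → L functions satisfying the median-based decomposition f_i(x) = med(f_i(x⁰_k), x_k, f_i(x¹_k)) for all k and x. If f₁ and f₂ agree on all boolean tuples {0,1}ⁿ, then f₁ = f₂. -/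
variable {L : Type*}

theorem stmt10 [DistribLattice L] [BoundedOrder L] {n : ℕ}
    (f₁ f₂ : (Fin n → L) → L)
    (h₁ : ∀ (k : Fin n) (x : Fin n → L),
      f₁ x = med (f₁ (Function.update x k ⊥)) (x k) (f₁ (Function.update x k ⊤)))
    (h₂ : ∀ (k : Fin n) (x : Fin n → L),
      f₂ x = med (f₂ (Function.update x k ⊥)) (x k) (f₂ (Function.update x k ⊤)))
    (hb : ∀ b : Fin n → L, (∀ i, b i = ⊥ ∨ b i = ⊤) → f₁ b = f₂ b) :
    f₁ = f₂ := by
  suffices h : ∀ m : ℕ, ∀ x : Fin n → L,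
      (∀ i : Fin n, m ≤ i.val → x i = ⊥ ∨ x i = ⊤) → f₁ x = f₂ x by
    funext x
    exact h n x (fun i hi => absurd hi (by have := i.isLt; omega))
  intro m
  induction m with
  | zero => intro x hx; exact hb x (fun i => hx i (Nat.zero_le _))
  | succ m ih =>
    intro x hx
    by_cases hm : m < n
    · set k : Fin n := ⟨m, hm⟩
      have hup : ∀ c : L, c = ⊥ ∨ c = ⊤ → ∀ i : Fin n, m ≤ i.val →
          Function.update x k c i = ⊥ ∨ Function.update x k c i = ⊤ := by
        intro c hc i hi
        rcases eq_or_ne i k with rfl | hne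
        · simpa using hc
        · rw [Function.update_of_ne hne]
          have : i.val ≠ m := fun h => hne (Fin.ext h)
          exact hx i (by omega)
      rw [h₁ k x, h₂ k x, ih _ (hup ⊥ (Or.inl rfl)), ih _ (hup ⊤ (Or.inr rfl))]
    · exact ih x (fun i hi => hx i (by have := i.isLt; omega))
end

section
/- Let L be a bounded distributive lattice and g : Lⁿ → L a nondecreasing compatible function. For b ∈ {0,1}ⁿ define G_b(x) = g(b) ∧ ⋀{x_i : b_i = 1}. Then g(x) = ⋁{G_b(x) : b ∈ {0,1}ⁿ} for all x ∈ Lⁿ. -/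
variable {L : Type*}

lemma congSup [DistribLattice L] (t : L) :
    IsLatCong (fun a b : L => a ⊔ t = b ⊔ t) := by
  refine ⟨⟨fun a => rfl, fun h => h.symm, fun h h' => h.trans h'⟩, ?_, ?_⟩
  · intro a b c d h1 h2
    rw [sup_sup_distrib_right, h1, h2, ← sup_sup_distrib_right]
  · intro a b c d h1 h2
    rw [sup_inf_right, h1, h2, ← sup_inf_right]

lemma congInf [DistribLattice L] (t : L) :
    IsLatCong (fun a b : L => a ⊓ t = b ⊓ t) := by
  refine ⟨⟨fun a => rfl, fun h => h.symm, fun h h' => h.trans h'⟩, ?_, ?_⟩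
  · intro a b c d h1 h2
    rw [inf_sup_right, h1, h2, ← inf_sup_right]
  · intro a b c d h1 h2
    rw [inf_inf_distrib_right, h1, h2, ← inf_inf_distrib_right]

lemma onevar [DistribLattice L] [BoundedOrder L] {n : ℕ}
    (g : (Fin n → L) → L) (hmono : Monotone g) (hcomp : IsCompat g)
    (x : Fin n → L) (j : Fin n) :
    g x = (g (Function.update x j ⊤) ⊓ x j) ⊔ g (Function.update x j ⊥) := by
  set t := x j with ht
  have hfc : ∀ Θ : L → L → Prop, IsLatCong Θ → ∀ a b : L, Θ a b →
      Θ (g (Function.update x j a)) (g (Function.update x j b)) := by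
    intro Θ hΘ a b hab
    apply hcomp Θ hΘ
    intro i
    rcases eq_or_ne i j with rfl | h
    · simpa using hab
    · simp only [Function.update_of_ne h]; exact hΘ.1.refl _
  have h1 : g x ⊔ t = g (Function.update x j ⊥) ⊔ t := by
    have := hfc _ (congSup t) t ⊥ (by simp)
    simpa [ht, Function.update_eq_self] using this
  have h2 : g (Function.update x j ⊤) ⊓ t = g x ⊓ t := by
    have := hfc _ (congInf t) ⊤ t (by simp)
    simpa [ht, Function.update_eq_self] using this
  have hbot : g (Function.update x j ⊥) ≤ g x := by
    apply hmono; intro i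
    rcases eq_or_ne i j with rfl | h
    · simp
    · simp [Function.update_of_ne h]
  have htop : g x ≤ g (Function.update x j ⊤) := by
    apply hmono; intro i
    rcases eq_or_ne i j with rfl | h
    · simp
    · simp [Function.update_of_ne h]
  apply le_antisymm
  · have hle1 : g x ≤ g (Function.update x j ⊥) ⊔ t := by
      rw [← h1]; exact le_sup_left
    calc g x ≤ g (Function.update x j ⊤) ⊓ (g (Function.update x j ⊥) ⊔ t) :=
          le_inf htop hle1
      _ = (g (Function.update x j ⊤) ⊓ g (Function.update x j ⊥)) ⊔
            (g (Function.update x j ⊤) ⊓ t) := inf_sup_left _ _ _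
      _ ≤ (g (Function.update x j ⊤) ⊓ x j) ⊔ g (Function.update x j ⊥) := by
          rw [sup_comm]
          exact sup_le_sup le_rfl inf_le_right
  · refine sup_le ?_ hbot
    rw [h2]; exact inf_le_left

theorem stmt13 [DistribLattice L] [BoundedOrder L] {n : ℕ}
    (g : (Fin n → L) → L) (hmono : Monotone g) (hcomp : IsCompat g)
    (x : Fin n → L) :
    g x = Finset.univ.sup
      (fun S : Finset (Fin n) =>
        g (fun i => if i ∈ S then (⊤ : L) else ⊥) ⊓ S.inf x) := by
  have key : ∀ T : Finset (Fin n),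
      g x = T.powerset.sup (fun S =>
        g (fun i => if i ∈ T then (if i ∈ S then (⊤ : L) else ⊥) else x i) ⊓ S.inf x) := by
    intro T
    induction T using Finset.induction_on with
    | empty =>
      simp only [Finset.powerset_empty, Finset.sup_singleton]
      simp
    | @insert j T hj ih =>
      rw [ih, Finset.powerset_insert, Finset.sup_union, Finset.sup_image]
      rw [← Finset.sup_sup]
      apply Finset.sup_congr rfl
      intro S hS
      have hST : S ⊆ T := Finset.mem_powerset.mp hS
      have hjS : j ∉ S := fun h => hj (hST h)
      set y : Fin n → L := fun i => if i ∈ T then (if i ∈ S then (⊤ : L) else ⊥) else x i with hy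
      have hyj : y j = x j := by simp [hy, hj]
      have e1 : Function.update y j ⊤ =
          (fun i => if i ∈ insert j T then (if i ∈ insert j S then (⊤ : L) else ⊥) else x i) := by
        funext i
        rcases eq_or_ne i j with rfl | h
        · simp
        · simp [Function.update_of_ne h, hy, h]
      have e2 : Function.update y j ⊥ =
          (fun i => if i ∈ insert j T then (if i ∈ S then (⊤ : L) else ⊥) else x i) := by
        funext i
        rcases eq_or_ne i j with rfl | h
        · simp [hjS]
        · simp [Function.update_of_ne h, hy, h]
      have := onevar g hmono hcomp y j
      rw [e1, e2, hyj] at this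
      show _ = _ ⊔ _
      rw [this, inf_sup_right]
      simp only [Function.comp_apply, Finset.inf_insert]
      rw [sup_comm]
      congr 1
      rw [inf_assoc]
  rw [key Finset.univ, Finset.powerset_univ]
  apply Finset.sup_congr rfl
  intro S _
  have : (fun i => if i ∈ (Finset.univ : Finset (Fin n)) then (if i ∈ S then (⊤:L) else ⊥) else x i) = (fun i => if i ∈ S then (⊤:L) else ⊥) := by
    funext i; simp
  rw [this]
end

section
/- Let L be a bounded distributive lattice. The discrete Sugeno integral Su_m(u) = ⋁_{I ⊆ {1,…,n}} ( m(I) ∧ ⋀_{i ∈ I} u_i ), for an L-valued monotone measure m, is a compatible nondecreasing function Lⁿ → L satisfying Su_m(0,…,0) = 0 and Su_m(1,…,1) = 1. -/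
variable {L : Type*}

lemma cong_sup [Lattice L] [OrderBot L] {α : Type*} (Θ : L → L → Prop)
    (hΘ : IsLatCong Θ) (s : Finset α) (f g : α → L)
    (h : ∀ a ∈ s, Θ (f a) (g a)) : Θ (s.sup f) (s.sup g) := by
  induction s using Finset.cons_induction with
  | empty => simpa using hΘ.1.refl ⊥
  | cons a s ha ih =>
      simp only [Finset.sup_cons]
      exact hΘ.2.1 _ _ _ _ (h a (Finset.mem_cons_self a s))
        (ih fun b hb => h b (Finset.mem_cons_of_mem hb))

lemma cong_inf [Lattice L] [OrderTop L] {α : Type*} (Θ : L → L → Prop)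
    (hΘ : IsLatCong Θ) (s : Finset α) (f g : α → L)
    (h : ∀ a ∈ s, Θ (f a) (g a)) : Θ (s.inf f) (s.inf g) := by
  induction s using Finset.cons_induction with
  | empty => simpa using hΘ.1.refl ⊤
  | cons a s ha ih =>
      simp only [Finset.inf_cons]
      exact hΘ.2.2 _ _ _ _ (h a (Finset.mem_cons_self a s))
        (ih fun b hb => h b (Finset.mem_cons_of_mem hb))

theorem stmt15 [DistribLattice L] [BoundedOrder L] {n : ℕ}
    (m : Finset (Fin n) → L) (h0 : m ∅ = ⊥) (h1 : m Finset.univ = ⊤)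
    (hm : ∀ I J : Finset (Fin n), I ⊆ J → m I ≤ m J) :
    IsCompat (fun u : Fin n → L => Finset.univ.sup fun S => m S ⊓ S.inf u) ∧
    Monotone (fun u : Fin n → L => Finset.univ.sup fun S => m S ⊓ S.inf u) ∧
    (Finset.univ.sup fun S : Finset (Fin n) => m S ⊓ S.inf (fun _ => (⊥ : L))) = ⊥ ∧
    (Finset.univ.sup fun S : Finset (Fin n) => m S ⊓ S.inf (fun _ => (⊤ : L))) = ⊤ := by
  refine ⟨?_, ?_, ?_, ?_⟩
  · intro Θ hΘ x y hxy
    exact cong_sup Θ hΘ _ _ _ fun S _ =>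
      hΘ.2.2 _ _ _ _ (hΘ.1.refl (m S)) (cong_inf Θ hΘ S x y fun i _ => hxy i)
  · intro u v huv
    exact Finset.sup_mono_fun fun S _ =>
      inf_le_inf_left _ (Finset.inf_mono_fun fun i _ => huv i)
  · refine le_antisymm (Finset.sup_le fun S _ => ?_) bot_le
    rcases S.eq_empty_or_nonempty with rfl | hS
    · simp [h0]
    · simp [Finset.inf_const hS]
  · refine le_antisymm le_top ?_
    have := Finset.le_sup (f := fun S : Finset (Fin n) => m S ⊓ S.inf (fun _ => (⊤ : L)))
      (Finset.mem_univ Finset.univ)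
    simpa [h1] using this
end

section
/- Let L be a bounded distributive lattice and A : Lⁿ → L an aggregation function (nondecreasing with A(0,…,0) = 0 and A(1,…,1) = 1). Then A is compatible if and only if there exists an L-valued monotone measure m on {1,…,n} such that A(u) = ⋁_{I ⊆ {1,…,n}} ( m(I) ∧ ⋀_{i ∈ I} u_i ) for all u ∈ Lⁿ; moreover, m is then given by m(I) = A(1_I). -/
variable {L : Type*}

lemma congMeet_isCong [DistribLattice L] (c : L) :
    IsLatCong (fun x y => x ⊓ c = y ⊓ c) := by
  refine ⟨⟨fun _ => rfl, fun h => h.symm, fun h1 h2 => h1.trans h2⟩, ?_, ?_⟩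
  · intro a b x y h1 h2; rw [inf_sup_right, h1, h2, ← inf_sup_right]
  · intro a b x y h1 h2; rw [inf_inf_distrib_right, h1, h2, ← inf_inf_distrib_right]

lemma congJoin_isCong [DistribLattice L] (c : L) :
    IsLatCong (fun x y => x ⊔ c = y ⊔ c) := by
  refine ⟨⟨fun _ => rfl, fun h => h.symm, fun h1 h2 => h1.trans h2⟩, ?_, ?_⟩
  · intro a b x y h1 h2; rw [sup_sup_distrib_right, h1, h2, ← sup_sup_distrib_right]
  · intro a b x y h1 h2; rw [sup_inf_right, h1, h2, ← sup_inf_right]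

lemma cong_finsetSup [DistribLattice L] [BoundedOrder L] {Θ : L → L → Prop}
    (hΘ : IsLatCong Θ) {α : Type*} (s : Finset α) (f g : α → L)
    (h : ∀ i ∈ s, Θ (f i) (g i)) : Θ (s.sup f) (s.sup g) := by
  classical
  induction s using Finset.induction_on with
  | empty => simpa using hΘ.1.refl ⊥
  | insert _ _ hk ih =>
    rw [Finset.sup_insert, Finset.sup_insert]
    exact hΘ.2.1 _ _ _ _ (h _ (Finset.mem_insert_self _ _))
      (ih fun i hi => h i (Finset.mem_insert_of_mem hi))

lemma cong_finsetInf [DistribLattice L] [BoundedOrder L] {Θ : L → L → Prop}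
    (hΘ : IsLatCong Θ) {α : Type*} (s : Finset α) (f g : α → L)
    (h : ∀ i ∈ s, Θ (f i) (g i)) : Θ (s.inf f) (s.inf g) := by
  classical
  induction s using Finset.induction_on with
  | empty => simpa using hΘ.1.refl ⊤
  | insert _ _ hk ih =>
    rw [Finset.inf_insert, Finset.inf_insert]
    exact hΘ.2.2 _ _ _ _ (h _ (Finset.mem_insert_self _ _))
      (ih fun i hi => h i (Finset.mem_insert_of_mem hi))

lemma medDecomp [DistribLattice L] [BoundedOrder L] {n : ℕ}
    {A : (Fin n → L) → L} (hA : IsCompat A) (hmono : Monotone A)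
    (u : Fin n → L) (k : Fin n) :
    A u = A (Function.update u k ⊥) ⊔ (u k ⊓ A (Function.update u k ⊤)) := by
  have h1 : A u ⊓ u k = A (Function.update u k ⊤) ⊓ u k := by
    apply hA _ (congMeet_isCong (u k))
    intro i
    by_cases hi : i = k
    · subst hi; simp
    · rw [Function.update_of_ne hi]
  have h2 : A u ⊔ u k = A (Function.update u k ⊥) ⊔ u k := by
    apply hA _ (congJoin_isCong (u k))
    intro i
    by_cases hi : i = k
    · subst hi; simp
    · rw [Function.update_of_ne hi]
  have ha : A (Function.update u k ⊥) ≤ A u := by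
    apply hmono
    intro i
    by_cases hi : i = k
    · subst hi; simp
    · rw [Function.update_of_ne hi]
  calc A u = A u ⊓ (A u ⊔ u k) := (inf_sup_self).symm
    _ = A u ⊓ (A (Function.update u k ⊥) ⊔ u k) := by rw [h2]
    _ = (A u ⊓ A (Function.update u k ⊥)) ⊔ (A u ⊓ u k) := inf_sup_left _ _ _
    _ = A (Function.update u k ⊥) ⊔ (A (Function.update u k ⊤) ⊓ u k) := by
        rw [inf_eq_right.mpr ha, h1]
    _ = A (Function.update u k ⊥) ⊔ (u k ⊓ A (Function.update u k ⊤)) := by rw [inf_comm]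

lemma key_step [DistribLattice L] [BoundedOrder L] {n : ℕ}
    {A : (Fin n → L) → L} (hA : IsCompat A) (hmono : Monotone A)
    (u : Fin n → L) (T : Finset (Fin n)) :
    A u = T.powerset.sup fun S =>
      S.inf u ⊓ A (fun i => if i ∈ T then (if i ∈ S then (⊤ : L) else ⊥) else u i) := by
  classical
  induction T using Finset.induction_on with
  | empty =>
    rw [Finset.powerset_empty, Finset.sup_singleton]
    simp
  | @insert k T hk ih =>
    rw [Finset.powerset_insert, Finset.sup_union, Finset.sup_image, ← Finset.sup_sup]
    rw [ih]
    apply Finset.sup_congr rfl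
    intro S hS
    rw [Finset.mem_powerset] at hS
    have hkS : k ∉ S := fun h => hk (hS h)
    set w : Fin n → L := fun i => if i ∈ T then (if i ∈ S then (⊤ : L) else ⊥) else u i with hw
    have hbotv : (fun i => if i ∈ insert k T then (if i ∈ S then (⊤ : L) else ⊥) else u i)
        = Function.update w k ⊥ := by
      funext i
      by_cases hi : i = k
      · subst hi; simp [hkS]
      · rw [Function.update_of_ne hi, hw]
        simp [Finset.mem_insert, hi]
    have htopv : (fun i => if i ∈ insert k T then (if i ∈ insert k S then (⊤ : L) else ⊥) else u i)
        = Function.update w k ⊤ := by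
      funext i
      by_cases hi : i = k
      · subst hi; simp
      · rw [Function.update_of_ne hi, hw]
        have : i ∈ insert k S ↔ i ∈ S := by simp [Finset.mem_insert, hi]
        simp [Finset.mem_insert, hi, this]
    have hwk : w k = u k := by rw [hw]; simp [hk]
    simp only [Pi.sup_apply, Function.comp_apply, hbotv, htopv, Finset.inf_insert]
    rw [medDecomp hA hmono w k, hwk]
    rw [inf_sup_left]
    congr 1
    rw [← inf_assoc, inf_comm (S.inf u) (u k), inf_assoc]

theorem stmt16 [DistribLattice L] [BoundedOrder L] {n : ℕ}
    (A : (Fin n → L) → L) (hmono : Monotone A)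
    (hbot : A (fun _ => ⊥) = ⊥) (htop : A (fun _ => ⊤) = ⊤) :
    IsCompat A ↔
      ∃ m : Finset (Fin n) → L,
        m ∅ = ⊥ ∧ m Finset.univ = ⊤ ∧
        (∀ I J : Finset (Fin n), I ⊆ J → m I ≤ m J) ∧
        (∀ u : Fin n → L, A u = Finset.univ.sup fun S => m S ⊓ S.inf u) ∧
        (∀ I : Finset (Fin n), m I = A (fun i => if i ∈ I then ⊤ else ⊥)) := by
  classical
  constructor
  · intro hA
    refine ⟨fun I => A (fun i => if i ∈ I then ⊤ else ⊥), ?_, ?_, ?_, ?_, fun _ => rfl⟩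
    · simpa using hbot
    · simpa using htop
    · intro I J hIJ
      apply hmono
      intro i
      by_cases hi : i ∈ I
      · simp [hi, hIJ hi]
      · simp [hi]
    · intro u
      have := key_step hA hmono u Finset.univ
      rw [Finset.powerset_univ] at this
      rw [this]
      apply Finset.sup_congr rfl
      intro S _
      rw [inf_comm]
      congr 1
      simp
  · rintro ⟨m, -, -, -, hrep, -⟩
    intro Θ hΘ x y hxy
    rw [hrep x, hrep y]
    apply cong_finsetSup hΘ
    intro S _
    exact hΘ.2.2 _ _ _ _ (hΘ.1.refl (m S)) (cong_finsetInf hΘ S x y fun i _ => hxy i)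
end

section
/- Let L be a bounded distributive lattice and f : Lⁿ → L a nondecreasing compatible function with f(0,…,0) = 0 and f(1,…,1) = 1. Then f is idempotent: f(c,…,c) = c for every c ∈ L. -/
variable {L : Type*}

theorem stmt19 [DistribLattice L] [BoundedOrder L] {n : ℕ}
    (f : (Fin n → L) → L) (hmono : Monotone f) (hcomp : IsCompat f)
    (hbot : f (fun _ => ⊥) = ⊥) (htop : f (fun _ => ⊤) = ⊤) (c : L) :
    f (fun _ => c) = c := by
  have hΘ1 : IsLatCong (fun a b : L => a ⊔ c = b ⊔ c) := by
    refine ⟨⟨fun _ => rfl, fun h => h.symm, fun h h' => h.trans h'⟩, ?_, ?_⟩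
    · intro a b x y h h'
      calc (a ⊔ x) ⊔ c = (a ⊔ c) ⊔ (x ⊔ c) := by rw [← sup_sup_sup_comm, sup_idem]
        _ = (b ⊔ c) ⊔ (y ⊔ c) := by rw [h, h']
        _ = (b ⊔ y) ⊔ c := by rw [sup_sup_sup_comm, sup_idem]
    · intro a b x y h h'
      calc a ⊓ x ⊔ c = (a ⊔ c) ⊓ (x ⊔ c) := sup_inf_right ..
        _ = (b ⊔ c) ⊓ (y ⊔ c) := by rw [h, h']
        _ = b ⊓ y ⊔ c := (sup_inf_right ..).symm
  have hΘ2 : IsLatCong (fun a b : L => a ⊓ c = b ⊓ c) := by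
    refine ⟨⟨fun _ => rfl, fun h => h.symm, fun h h' => h.trans h'⟩, ?_, ?_⟩
    · intro a b x y h h'
      calc (a ⊔ x) ⊓ c = a ⊓ c ⊔ x ⊓ c := inf_sup_right ..
        _ = b ⊓ c ⊔ y ⊓ c := by rw [h, h']
        _ = (b ⊔ y) ⊓ c := (inf_sup_right ..).symm
    · intro a b x y h h'
      calc (a ⊓ x) ⊓ c = (a ⊓ c) ⊓ (x ⊓ c) := by rw [← inf_inf_inf_comm, inf_idem]
        _ = (b ⊓ c) ⊓ (y ⊓ c) := by rw [h, h']
        _ = (b ⊓ y) ⊓ c := by rw [inf_inf_inf_comm, inf_idem]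
  have h1 := hcomp _ hΘ1 (fun _ => (⊥ : L)) (fun _ => c) (fun _ => by simp)
  have h2 := hcomp _ hΘ2 (fun _ => (⊤ : L)) (fun _ => c) (fun _ => by simp)
  simp only [hbot, htop, bot_sup_eq, top_inf_eq] at h1 h2
  exact le_antisymm (sup_eq_right.mp h1.symm) (inf_eq_right.mp h2.symm)
end
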